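/- arXiv:2009.03956 — 3 statements merged into one kernel-verified Lean document; each statement's English description precedes it below -/
import Mathlib

section
/- Let η: [0,1] → [0,∞) be an increasing continuous function with η(0) = 0 such that t ↦ η(t)/t is nonincreasing on (0,1]. Suppose A, r, C > 0 satisfy A ≤ 2η(Cr√A), A ≤ 1, r ≤ 1, and Cr√A ≤ 1. Then A ≤ max(4C² η²(r²)/r², r²/C²), and in particular A ≤ C' η²(r²)/r² for a constant C' depending only on C (using that η(t) ≥ c t for t ∈ [0,1] for some c > 0, which follows if additionally η(1) > 0). -/
open Real

theorem iteration_inequality_bound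
    (C : ℝ) (hC : 0 < C) (η : ℝ → ℝ)
    (hmono : ∀ x y, 0 ≤ x → x ≤ y → y ≤ 1 → η x ≤ η y)
    (hcont : ContinuousOn η (Set.Icc 0 1))
    (h0 : η 0 = 0) (h1 : 0 < η 1)
    (hratio : ∀ x y, 0 < x → x ≤ y → y ≤ 1 → η y / y ≤ η x / x) :
    ∃ C' : ℝ, 0 < C' ∧ ∀ A r : ℝ, 0 < A → 0 < r → r ≤ 1 → A ≤ 1 →
      C * r * Real.sqrt A ≤ 1 → A ≤ 2 * η (C * r * Real.sqrt A) →
      A ≤ max (4 * C ^ 2 * (η (r ^ 2)) ^ 2 / r ^ 2) (r ^ 2 / C ^ 2) ∧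
      A ≤ C' * (η (r ^ 2)) ^ 2 / r ^ 2 := by
  have hlow : ∀ x : ℝ, 0 < x → x ≤ 1 → η 1 * x ≤ η x := by
    intro x hx hx1
    have := hratio x 1 hx hx1 le_rfl
    rw [div_one] at this
    calc η 1 * x ≤ (η x / x) * x := by
            exact mul_le_mul_of_nonneg_right this hx.le
      _ = η x := by field_simp
  refine ⟨max (4 * C ^ 2) (1 / (C ^ 2 * (η 1) ^ 2)), by positivity, ?_⟩
  intro A r hA hr hr1 hA1 hCrA hkey
  have hs : Real.sqrt A * Real.sqrt A = A := Real.mul_self_sqrt hA.le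
  have hspos : 0 < Real.sqrt A := Real.sqrt_pos.mpr hA
  have hr2 : 0 < r ^ 2 := by positivity
  have hr21 : r ^ 2 ≤ 1 := by nlinarith
  have hηr2 : η 1 * r ^ 2 ≤ η (r ^ 2) := hlow _ hr2 hr21
  have hηr2nn : 0 ≤ η (r ^ 2) := le_trans (by positivity) hηr2
  rcases le_or_gt A (r ^ 2 / C ^ 2) with hcase | hcase
  · constructor
    · exact le_max_of_le_right hcase
    · calc A ≤ r ^ 2 / C ^ 2 := hcase
        _ ≤ (1 / (C ^ 2 * (η 1) ^ 2)) * (η (r ^ 2)) ^ 2 / r ^ 2 := by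
              rw [div_le_div_iff₀ (by positivity) hr2]
              have : (η 1 * r ^ 2) ^ 2 ≤ (η (r ^ 2)) ^ 2 := by
                apply pow_le_pow_left₀ (by positivity) hηr2
              have he : 1 / (C ^ 2 * (η 1) ^ 2) * (η (r ^ 2)) ^ 2 * C ^ 2
                  = (η (r ^ 2)) ^ 2 / (η 1) ^ 2 := by field_simp
              rw [he, le_div_iff₀ (by positivity)]
              nlinarith
        _ ≤ max (4 * C ^ 2) (1 / (C ^ 2 * (η 1) ^ 2)) * (η (r ^ 2)) ^ 2 / r ^ 2 := by
              gcongr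
              exact le_max_right _ _
  · -- A > r^2/C^2
    have hy : r ^ 2 ≤ C * r * Real.sqrt A := by
      have h1' : r / C ≤ Real.sqrt A := by
        rw [show r / C = Real.sqrt ((r / C) ^ 2) by
          rw [Real.sqrt_sq (by positivity)]]
        apply Real.sqrt_le_sqrt
        rw [div_pow]
        exact hcase.le
      calc r ^ 2 = C * r * (r / C) := by field_simp
        _ ≤ C * r * Real.sqrt A := by
            exact mul_le_mul_of_nonneg_left h1' (by positivity)
    have hrat := hratio (r ^ 2) (C * r * Real.sqrt A) hr2 hy hCrA
    have hypos : 0 < C * r * Real.sqrt A := by positivity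
    have hstep : A ≤ 2 * (C * r * Real.sqrt A) * (η (r ^ 2) / r ^ 2) := by
      rw [div_le_div_iff₀ hypos hr2] at hrat
      calc A ≤ 2 * η (C * r * Real.sqrt A) := hkey
        _ ≤ 2 * (C * r * Real.sqrt A) * (η (r ^ 2) / r ^ 2) := by
            have he : 2 * (C * r * Real.sqrt A) * (η (r ^ 2) / r ^ 2)
                = 2 * (η (r ^ 2) * (C * r * Real.sqrt A)) / r ^ 2 := by ring
            rw [he, le_div_iff₀ hr2]
            nlinarith
    have hsle : Real.sqrt A ≤ 2 * C * r * η (r ^ 2) / r ^ 2 := by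
      have : Real.sqrt A * Real.sqrt A ≤ (2 * C * r * η (r ^ 2) / r ^ 2) * Real.sqrt A := by
        rw [hs]
        calc A ≤ 2 * (C * r * Real.sqrt A) * (η (r ^ 2) / r ^ 2) := hstep
          _ = (2 * C * r * η (r ^ 2) / r ^ 2) * Real.sqrt A := by ring
      exact le_of_mul_le_mul_right this hspos
    have hmain : A ≤ 4 * C ^ 2 * (η (r ^ 2)) ^ 2 / r ^ 2 := by
      have h2 : A ≤ (2 * C * r * η (r ^ 2) / r ^ 2) ^ 2 := by
        rw [← hs]
        exact mul_self_le_mul_self hspos.le hsle |>.trans_eq (sq (2 * C * r * η (r ^ 2) / r ^ 2)).symm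
      calc A ≤ (2 * C * r * η (r ^ 2) / r ^ 2) ^ 2 := h2
        _ = 4 * C ^ 2 * (η (r ^ 2)) ^ 2 / r ^ 2 := by
            field_simp
            ring
    refine ⟨le_max_of_le_left hmain, ?_⟩
    calc A ≤ 4 * C ^ 2 * (η (r ^ 2)) ^ 2 / r ^ 2 := hmain
      _ ≤ max (4 * C ^ 2) (1 / (C ^ 2 * (η 1) ^ 2)) * (η (r ^ 2)) ^ 2 / r ^ 2 := by
          gcongr
          exact le_max_left _ _
end

section
/- Let η₁²(t) = ∫₀ᵗ (η²(s²)/s²)(1 + |log s|²) ds where η: [0,1] → [0,∞) is increasing with η(t) ≤ Ct^{1/2+α} for some C, α > 0. Then η₁ satisfies the doubling property: η₁(2r) ≤ C' η₁(r) for all r ∈ (0, 1/2], with C' depending only on C, α. -/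
/-!
If `η(t)/t` is nonincreasing then `η(4t) ≤ 4η(t)`, and `1 + log²(2s) ≤ 2(1 + log² s)`
because `2 log² 2 < 1`; so the integrand `η²(s²)/s² · (1 + |log s|²)` defining `η₁²` at `2s`
is at most `8` times its value at `s`. The substitution `s ↦ 2s` then bounds `∫_r^{2r}` by
`16 ∫_{r/2}^r`, whence `η₁²(2r) ≤ 17 η₁²(r)` and `η₁(2r) ≤ √17 η₁(r) ≤ 5 η₁(r)`.
-/

open Real MeasureTheory Set

lemma integral_Ioo_two_mul_le {g : ℝ → ℝ} {K r : ℝ} (hr : 0 < r) (hK : 0 ≤ K)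
    (hg : ∀ x, 0 ≤ g x) (hdbl : ∀ x ∈ Icc (r / 2) r, g (2 * x) ≤ K * g x) :
    ∫ s in Ioo 0 (2 * r), g s ≤ (1 + 2 * K) * ∫ s in Ioo 0 r, g s := by
  by_cases hint : IntegrableOn g (Ioo 0 (2 * r))
  swap
  · -- off integrability the left side is the junk value `0`
    rw [integral_undef hint]
    exact mul_nonneg (by linarith) (integral_nonneg hg)
  have hII : ∀ a b, 0 ≤ a → a ≤ b → b ≤ 2 * r → IntervalIntegrable g volume a b :=
    fun a b ha hab hb => (intervalIntegrable_iff_integrableOn_Ioo_of_le hab).2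
      (hint.mono_set (Ioo_subset_Ioo ha hb))
  have hIoo : ∀ t, 0 ≤ t → ∫ s in Ioo 0 t, g s = ∫ s in (0)..t, g s := fun t ht => by
    rw [intervalIntegral.integral_of_le ht, integral_Ioc_eq_integral_Ioo]
  rw [hIoo _ (by linarith), hIoo _ hr.le]
  have hsplit : ∫ s in (0)..(2 * r), g s = (∫ s in (0)..r, g s) + ∫ s in r..(2 * r), g s :=
    (intervalIntegral.integral_add_adjacent_intervals
      (hII 0 r le_rfl hr.le (by linarith)) (hII r (2 * r) hr.le (by linarith) le_rfl)).symm
  have hsubst : ∫ s in r..(2 * r), g s = 2 * ∫ x in (r / 2)..r, g (2 * x) := by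
    rw [intervalIntegral.integral_comp_mul_left g two_ne_zero, smul_eq_mul,
      show 2 * (r / 2) = r by ring]
    ring
  have hcomp : ∫ x in (r / 2)..r, g (2 * x) ≤ K * ∫ x in (r / 2)..r, g x := by
    rw [← intervalIntegral.integral_const_mul]
    refine intervalIntegral.integral_mono_on (by linarith) ?_
      ((hII _ _ (by linarith) (by linarith) (by linarith)).const_mul K) hdbl
    simpa using (hII r (2 * r) hr.le (by linarith) le_rfl).comp_mul_left (c := 2)
  have hshrink : ∫ x in (r / 2)..r, g x ≤ ∫ x in (0)..r, g x :=
    intervalIntegral.integral_mono_interval (by linarith) (by linarith) le_rfl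
      (ae_of_all _ hg) (hII 0 r le_rfl hr.le (by linarith))
  calc ∫ s in (0)..(2 * r), g s
      = (∫ s in (0)..r, g s) + 2 * ∫ x in (r / 2)..r, g (2 * x) := by rw [hsplit, hsubst]
    _ ≤ (∫ s in (0)..r, g s) + 2 * (K * ∫ s in (0)..r, g s) := by
        gcongr
        exact hcomp.trans (mul_le_mul_of_nonneg_left hshrink hK)
    _ = (1 + 2 * K) * ∫ s in (0)..r, g s := by ring

lemma le_mul_of_div_antitone {η : ℝ → ℝ}
    (hdiv : ∀ x y, 0 < x → x ≤ y → y ≤ 1 → η y / y ≤ η x / x) {c t : ℝ}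
    (hc : 1 ≤ c) (ht : 0 < t) (hct : c * t ≤ 1) : η (c * t) ≤ c * η t := by
  have h := hdiv t (c * t) ht (by nlinarith) hct
  rw [div_le_div_iff₀ (by positivity) ht] at h
  nlinarith

lemma one_add_sq_abs_log_two_mul_le {x : ℝ} (hx : 0 < x) :
    1 + |log (2 * x)| ^ 2 ≤ 2 * (1 + |log x| ^ 2) := by
  have hlog2 : 0 < log 2 := log_pos one_lt_two
  have habs : |log (2 * x)| ≤ log 2 + |log x| := by
    rw [log_mul two_ne_zero hx.ne']
    exact (abs_add_le _ _).trans_eq (by rw [abs_of_pos hlog2])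
  have hsq : |log (2 * x)| ^ 2 ≤ (log 2 + |log x|) ^ 2 := by
    gcongr
  nlinarith [log_two_lt_d9, sq_nonneg (log 2 - |log x|)]

noncomputable def eta1Integrand (η : ℝ → ℝ) (s : ℝ) : ℝ :=
  η (s ^ 2) ^ 2 / s ^ 2 * (1 + |log s| ^ 2)

lemma eta1Integrand_nonneg (η : ℝ → ℝ) (s : ℝ) : 0 ≤ eta1Integrand η s := by
  unfold eta1Integrand
  positivity

lemma eta1Integrand_two_mul_le {η : ℝ → ℝ} {x : ℝ} (hx : 0 < x)
    (h0 : 0 ≤ η ((2 * x) ^ 2)) (h4 : η ((2 * x) ^ 2) ≤ 4 * η (x ^ 2)) :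
    eta1Integrand η (2 * x) ≤ 8 * eta1Integrand η x := by
  have hsq : η ((2 * x) ^ 2) ^ 2 ≤ (4 * η (x ^ 2)) ^ 2 := by
    gcongr
  calc eta1Integrand η (2 * x)
      ≤ (4 * η (x ^ 2)) ^ 2 / (2 * x) ^ 2 * (2 * (1 + |log x| ^ 2)) := by
        unfold eta1Integrand
        gcongr
        exact one_add_sq_abs_log_two_mul_le hx
    _ = 8 * eta1Integrand η x := by
        unfold eta1Integrand
        field_simp
        ring

theorem eta1_doubling_general (C α : ℝ) :
    ∃ C' : ℝ, 0 < C' ∧ ∀ η : ℝ → ℝ,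
      (∀ x y, 0 ≤ x → x ≤ y → y ≤ 1 → η x ≤ η y) →
      ContinuousOn η (Set.Icc 0 1) →
      η 0 = 0 →
      (∀ t ∈ Set.Icc (0:ℝ) 1, 0 ≤ η t) →
      ConcaveOn ℝ (Set.Icc 0 1) η →
      (∀ x y, 0 < x → x ≤ y → y ≤ 1 → η y / y ≤ η x / x) →
      (∀ t ∈ Set.Icc (0:ℝ) 1, η t ≤ C * t ^ (1/2 + α)) →
      ∀ r ∈ Set.Ioc (0:ℝ) (1/2),
        Real.sqrt (∫ s in Set.Ioo (0:ℝ) (2*r),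
            (η (s ^ 2)) ^ 2 / s ^ 2 * (1 + |Real.log s| ^ 2)) ≤
          C' * Real.sqrt (∫ s in Set.Ioo (0:ℝ) r,
            (η (s ^ 2)) ^ 2 / s ^ 2 * (1 + |Real.log s| ^ 2)) := by
  refine ⟨5, by norm_num, fun η _ _ _ hnonneg _ hdiv _ r ⟨hr, hr2⟩ => ?_⟩
  have hdbl : ∀ x ∈ Icc (r / 2) r, eta1Integrand η (2 * x) ≤ 8 * eta1Integrand η x := by
    rintro x ⟨hx, hxr⟩
    have hx0 : 0 < x := by linarith
    have hsq : (2 * x) ^ 2 = 4 * x ^ 2 := by ring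
    have hle : 4 * x ^ 2 ≤ 1 := by nlinarith
    refine eta1Integrand_two_mul_le hx0 (hnonneg _ ⟨by positivity, hsq ▸ hle⟩) ?_
    rw [hsq]
    exact le_mul_of_div_antitone hdiv (by norm_num) (by positivity) hle
  have hI := integral_Ioo_two_mul_le hr (by norm_num) (eta1Integrand_nonneg η) hdbl
  calc √(∫ s in Ioo 0 (2 * r), eta1Integrand η s)
      ≤ √(17 * ∫ s in Ioo 0 r, eta1Integrand η s) := sqrt_le_sqrt (by linarith)
    _ = √17 * √(∫ s in Ioo 0 r, eta1Integrand η s) := sqrt_mul (by norm_num) _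
    _ ≤ 5 * √(∫ s in Ioo 0 r, eta1Integrand η s) := by
        gcongr
        rw [sqrt_le_left (by norm_num)]
        norm_num

theorem eta1_doubling (C α : ℝ) (hC : 0 < C) (hα : 0 < α) :
    ∃ C' : ℝ, 0 < C' ∧ ∀ η : ℝ → ℝ,
      (∀ x y, 0 ≤ x → x ≤ y → y ≤ 1 → η x ≤ η y) →
      ContinuousOn η (Set.Icc 0 1) →
      η 0 = 0 →
      (∀ t ∈ Set.Icc (0:ℝ) 1, 0 ≤ η t) →
      ConcaveOn ℝ (Set.Icc 0 1) η →
      (∀ x y, 0 < x → x ≤ y → y ≤ 1 → η y / y ≤ η x / x) →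
      (∀ t ∈ Set.Icc (0:ℝ) 1, η t ≤ C * t ^ (1/2 + α)) →
      ∀ r ∈ Set.Ioc (0:ℝ) (1/2),
        Real.sqrt (∫ s in Set.Ioo (0:ℝ) (2*r),
            (η (s ^ 2)) ^ 2 / s ^ 2 * (1 + |Real.log s| ^ 2)) ≤
          C' * Real.sqrt (∫ s in Set.Ioo (0:ℝ) r,
            (η (s ^ 2)) ^ 2 / s ^ 2 * (1 + |Real.log s| ^ 2)) :=
  eta1_doubling_general C α
end

section
/- Let u ∈ C(B̄_r) ∩ C²({u>0} ∩ B_r) with u(0) = 0 satisfy Δu ≥ κ > 0 on the open set {u > 0} ∩ B_r, and suppose there exists x₀ ∈ B_{r/2} with u(x₀) > 0. Then sup_{∂B_r} u ≥ (κ/(4n)) (r/2)² = κ r²/(16n). -/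
open Real MeasureTheory Metric

noncomputable def laplacian {n : ℕ} (f : EuclideanSpace ℝ (Fin n) → ℝ)
    (x : EuclideanSpace ℝ (Fin n)) : ℝ :=
  ∑ i, fderiv ℝ (fun y => fderiv ℝ f y (EuclideanSpace.single i 1)) x
    (EuclideanSpace.single i 1)

/-!
With `c = κ / (4n)` and `w x = u x - c ‖x - x₀‖²` we get `Δw ≥ κ - 2cn = κ / 2 > 0` on
`Ω = {u > 0} ∩ B_r`. At an interior maximum of a `C²` function every pure second derivative is
`≤ 0`, so the maximum of `w` over `Ω̄` is attained at a frontier point `y`, where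
`w y ≥ w x₀ = u x₀ > 0`. Then `u y > 0`, so `y` is not on `∂{u > 0}` and must lie on `∂B_r`, and
`u y ≥ c ‖y - x₀‖² ≥ c (r/2)²`.
-/

open Filter Set Topology

theorem IsLocalMax.hasDerivAt_deriv_nonpos {f f' : ℝ → ℝ} {x a : ℝ} (hmax : IsLocalMax f x)
    (hf : ∀ᶠ t in 𝓝 x, HasDerivAt f (f' t) t) (hf' : HasDerivAt f' a x) : a ≤ 0 := by
  by_contra! ha
  have hf'x : f' x = 0 := hmax.hasDerivAt_eq_zero hf.self_of_nhds
  have hpos : ∀ᶠ t in 𝓝[>] x, 0 < f' t := by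
    filter_upwards [(hasDerivAt_iff_tendsto_slope.1 hf').mono_left
        (nhdsGT_le_nhdsNE x) |>.eventually (eventually_gt_nhds ha), self_mem_nhdsWithin]
      with t hslope hxt
    exact pos_of_slope_pos hxt hslope hf'x
  obtain ⟨b, hxb : x < b, hb⟩ := mem_nhdsGT_iff_exists_Ioo_subset.1
    (hpos.and (nhdsWithin_le_nhds (hf.and hmax)))
  have hmono : StrictMonoOn f (Ico x b) := by
    refine strictMonoOn_of_deriv_pos (convex_Ico x b) (fun t ht => ?_) (fun t ht => ?_)
    · rcases eq_or_lt_of_le ht.1 with rfl | hxt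
      · exact hf.self_of_nhds.continuousAt.continuousWithinAt
      · exact (hb ⟨hxt, ht.2⟩).2.1.continuousAt.continuousWithinAt
    · rw [interior_Ico] at ht
      rw [(hb ht).2.1.deriv]
      exact (hb ht).1
  have hmid : (x + b) / 2 ∈ Ioo x b := ⟨by linarith, by linarith⟩
  exact (hmono (left_mem_Ico.2 hxb) (Ioo_subset_Ico_self hmid) hmid.1).not_ge (hb hmid).2.2

section SecondDerivative

variable {E : Type*} [NormedAddCommGroup E] [NormedSpace ℝ E]

theorem ContDiffAt.differentiableAt_fderiv_apply {F : Type*} [NormedAddCommGroup F]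
    [NormedSpace ℝ F] {f : E → F} {y : E} (hf : ContDiffAt ℝ 2 f y) (e : E) :
    DifferentiableAt ℝ (fun x => fderiv ℝ f x e) y :=
  ((hf.fderiv_right (m := 1) (by norm_num)).differentiableAt (by norm_num)).clm_apply
    (differentiableAt_const e)

theorem IsLocalMax.fderiv_fderiv_apply_nonpos {v : E → ℝ} {y : E} (hmax : IsLocalMax v y)
    (hv : ContDiffAt ℝ 2 v y) (e : E) : fderiv ℝ (fun x => fderiv ℝ v x e) y e ≤ 0 := by
  have hline : ∀ t : ℝ, HasDerivAt (fun t : ℝ => y + t • e) e t := fun t => by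
    simpa using ((hasDerivAt_id t).smul_const e).const_add y
  have hline_tendsto : Tendsto (fun t : ℝ => y + t • e) (𝓝 0) (𝓝 y) := by
    simpa using (hline 0).continuousAt.tendsto
  have hdiff : ∀ᶠ t in 𝓝 (0 : ℝ), DifferentiableAt ℝ v (y + t • e) :=
    hline_tendsto.eventually ((hv.eventually (by simp)).mono fun x hx =>
      hx.differentiableAt (by norm_num))
  refine IsLocalMax.hasDerivAt_deriv_nonpos (f := fun t => v (y + t • e))
    (f' := fun t => fderiv ℝ v (y + t • e) e) (x := 0) ?_ ?_ ?_
  · simpa [IsLocalMax, IsMaxFilter] using hline_tendsto.eventually hmax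
  · filter_upwards [hdiff] with t ht
    exact ht.hasFDerivAt.comp_hasDerivAt t (hline t)
  · exact (hv.differentiableAt_fderiv_apply e).hasFDerivAt.comp_hasDerivAt_of_eq 0 (hline 0)
      (by simp)

theorem fderiv_fderiv_apply_sub {f g : E → ℝ} {y : E} (hf : ContDiffAt ℝ 2 f y)
    (hg : ContDiffAt ℝ 2 g y) (e : E) :
    fderiv ℝ (fun x => fderiv ℝ (fun x => f x - g x) x e) y e =
      fderiv ℝ (fun x => fderiv ℝ f x e) y e - fderiv ℝ (fun x => fderiv ℝ g x e) y e := by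
  have hfirst : (fun x => fderiv ℝ (fun x => f x - g x) x e) =ᶠ[𝓝 y]
      fun x => fderiv ℝ f x e - fderiv ℝ g x e := by
    filter_upwards [hf.eventually (by simp), hg.eventually (by simp)] with x hfx hgx
    rw [fderiv_fun_sub (hfx.differentiableAt (by norm_num)) (hgx.differentiableAt (by norm_num))]
    rfl
  rw [hfirst.fderiv_eq, fderiv_fun_sub (hf.differentiableAt_fderiv_apply e)
    (hg.differentiableAt_fderiv_apply e)]
  rfl

end SecondDerivative

section Quadratic

variable {F : Type*} [NormedAddCommGroup F] [InnerProductSpace ℝ F]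

theorem fderiv_const_mul_norm_sub_sq_apply (c : ℝ) (x₀ x e : F) :
    fderiv ℝ (fun x => c * ‖x - x₀‖ ^ 2) x e = 2 * c * inner ℝ (x - x₀) e := by
  rw [((hasFDerivAt_sub_const (𝕜 := ℝ) (x := x) x₀).norm_sq.const_mul c).fderiv]
  simp only [map_sub, ContinuousLinearMap.comp_id, smul_apply, sub_apply, coe_innerSL_apply,
    nsmul_eq_mul, Nat.cast_ofNat, smul_eq_mul, inner_sub_left]
  ring

theorem fderiv_fderiv_apply_const_mul_norm_sub_sq (c : ℝ) (x₀ y e : F) :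
    fderiv ℝ (fun x => fderiv ℝ (fun x => c * ‖x - x₀‖ ^ 2) x e) y e = 2 * c * ‖e‖ ^ 2 := by
  simp_rw [fderiv_const_mul_norm_sub_sq_apply]
  rw [(((hasFDerivAt_sub_const (x := y) x₀).inner ℝ (hasFDerivAt_const e y)).const_mul
    (2 * c)).fderiv]
  simp

end Quadratic

section Laplacian

variable {n : ℕ} {v : EuclideanSpace ℝ (Fin n) → ℝ} {y : EuclideanSpace ℝ (Fin n)}

theorem IsLocalMax.laplacian_nonpos (hmax : IsLocalMax v y) (hv : ContDiffAt ℝ 2 v y) :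
    laplacian v y ≤ 0 :=
  Finset.sum_nonpos fun _ _ => hmax.fderiv_fderiv_apply_nonpos hv _

theorem laplacian_sub {f g : EuclideanSpace ℝ (Fin n) → ℝ} (hf : ContDiffAt ℝ 2 f y)
    (hg : ContDiffAt ℝ 2 g y) :
    laplacian (fun x => f x - g x) y = laplacian f y - laplacian g y := by
  simp only [laplacian, fderiv_fderiv_apply_sub hf hg, Finset.sum_sub_distrib]

theorem laplacian_const_mul_norm_sub_sq (c : ℝ) (x₀ : EuclideanSpace ℝ (Fin n)) :
    laplacian (fun x => c * ‖x - x₀‖ ^ 2) y = 2 * c * n := by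
  simp only [laplacian, fderiv_fderiv_apply_const_mul_norm_sub_sq, PiLp.norm_single, norm_one,
    one_pow, mul_one, Finset.sum_const, Finset.card_univ, Fintype.card_fin, nsmul_eq_mul]
  ring

theorem IsOpen.exists_mem_frontier_isMaxOn_of_laplacian_pos {Ω : Set (EuclideanSpace ℝ (Fin n))}
    (hΩ : IsOpen Ω) (hne : Ω.Nonempty) (hK : IsCompact (closure Ω))
    (hvc : ContinuousOn v (closure Ω)) (hv : ContDiffOn ℝ 2 v Ω)
    (hΔ : ∀ x ∈ Ω, 0 < laplacian v x) : ∃ y ∈ frontier Ω, IsMaxOn v (closure Ω) y := by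
  obtain ⟨y, hy, hmax⟩ := hK.exists_isMaxOn hne.closure hvc
  refine ⟨y, ⟨hy, fun hyΩ => ?_⟩, hmax⟩
  rw [hΩ.interior_eq] at hyΩ
  have hlocal : IsLocalMax v y :=
    hmax.isLocalMax (mem_of_superset (hΩ.mem_nhds hyΩ) subset_closure)
  exact (hΔ y hyΩ).not_ge (hlocal.laplacian_nonpos (hv.contDiffAt (hΩ.mem_nhds hyΩ)))

end Laplacian

theorem ContinuousOn.isOpen_setOf_pos_inter {X : Type*} [TopologicalSpace X] {s : Set X}
    {u : X → ℝ} (hu : ContinuousOn u s) (hs : IsOpen s) : IsOpen ({x | 0 < u x} ∩ s) := by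
  rw [inter_comm]
  exact hu.isOpen_inter_preimage hs isOpen_Ioi

theorem norm_eq_of_mem_frontier_setOf_pos_inter_ball {E : Type*} [SeminormedAddCommGroup E]
    {u : E → ℝ} {r : ℝ} (hu : ContinuousOn u (ball 0 r)) {y : E}
    (hy : y ∈ frontier ({x | 0 < u x} ∩ ball 0 r)) (huy : 0 < u y) : ‖y‖ = r := by
  have hy_le : ‖y‖ ≤ r := mem_closedBall_zero_iff.1
    (closure_ball_subset_closedBall (closure_mono inter_subset_right hy.1))
  refine hy_le.antisymm (not_lt.1 fun hyr => hy.2 ?_)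
  rw [(hu.isOpen_setOf_pos_inter isOpen_ball).interior_eq]
  exact ⟨huy, mem_ball_zero_iff.2 hyr⟩

theorem nondegeneracy_growth_general {n : ℕ} (hn : 1 ≤ n) (r κ : ℝ) (hr : 0 < r) (hκ : 0 < κ)
    (u : EuclideanSpace ℝ (Fin n) → ℝ)
    (hc : ContinuousOn u (Metric.closedBall 0 r))
    (hsm : ContDiffOn ℝ 2 u ({x | 0 < u x} ∩ Metric.ball 0 r))
    (hΔ : ∀ x ∈ {x | 0 < u x} ∩ Metric.ball (0 : EuclideanSpace ℝ (Fin n)) r,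
      κ ≤ laplacian u x)
    (x₀ : EuclideanSpace ℝ (Fin n)) (hx₀ : x₀ ∈ Metric.ball (0 : EuclideanSpace ℝ (Fin n)) (r / 2))
    (hux₀ : 0 < u x₀) :
    κ * r ^ 2 / (16 * n) ≤ sSup (u '' Metric.sphere (0 : EuclideanSpace ℝ (Fin n)) r) := by
  set c := κ / (4 * n)
  set Ω := {x | 0 < u x} ∩ ball (0 : EuclideanSpace ℝ (Fin n)) r
  have hc₀ : 0 < c := by positivity
  have hq : ContDiff ℝ 2 fun x => c * ‖x - x₀‖ ^ 2 :=
    contDiff_const.mul ((contDiff_norm_sq ℝ).comp (contDiff_id.sub contDiff_const))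
  have hΩ : IsOpen Ω := (hc.mono ball_subset_closedBall).isOpen_setOf_pos_inter isOpen_ball
  have hΩr : closure Ω ⊆ closedBall 0 r :=
    (closure_mono inter_subset_right).trans closure_ball_subset_closedBall
  have hx₀Ω : x₀ ∈ Ω := ⟨hux₀, ball_subset_ball (half_le_self hr.le) hx₀⟩
  have hΔw : ∀ x ∈ Ω, 0 < laplacian (fun x => u x - c * ‖x - x₀‖ ^ 2) x := by
    intro x hx
    have h2cn : 2 * c * n = κ / 2 := by
      have : (n : ℝ) ≠ 0 := by positivity
      simp only [c]
      field_simp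
      ring
    rw [laplacian_sub (hsm.contDiffAt (hΩ.mem_nhds hx)) hq.contDiffAt,
      laplacian_const_mul_norm_sub_sq]
    linarith [hΔ x hx]
  obtain ⟨y, hyΩ, hymax⟩ := hΩ.exists_mem_frontier_isMaxOn_of_laplacian_pos ⟨x₀, hx₀Ω⟩
    ((isCompact_closedBall 0 r).of_isClosed_subset isClosed_closure hΩr)
    ((hc.mono hΩr).sub hq.continuous.continuousOn) (hsm.sub hq.contDiffOn) hΔw
  have hwy : u x₀ ≤ u y - c * ‖y - x₀‖ ^ 2 := by simpa using hymax (subset_closure hx₀Ω)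
  have huy : 0 < u y := by linarith [mul_nonneg hc₀.le (sq_nonneg ‖y - x₀‖)]
  have hy : ‖y‖ = r :=
    norm_eq_of_mem_frontier_setOf_pos_inter_ball (hc.mono ball_subset_closedBall) hyΩ huy
  calc κ * r ^ 2 / (16 * n) = c * (r / 2) ^ 2 := by ring
    _ ≤ c * ‖y - x₀‖ ^ 2 := by
      gcongr
      linarith [norm_sub_norm_le y x₀, mem_ball_zero_iff.1 hx₀]
    _ ≤ u y := by linarith
    _ ≤ sSup (u '' sphere 0 r) :=
      le_csSup ((isCompact_sphere 0 r).image_of_continuousOn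
        (hc.mono sphere_subset_closedBall)).bddAbove
        (mem_image_of_mem u (mem_sphere_zero_iff_norm.2 hy))

theorem nondegeneracy_growth {n : ℕ} (hn : 1 ≤ n) (r κ : ℝ) (hr : 0 < r) (hκ : 0 < κ)
    (u : EuclideanSpace ℝ (Fin n) → ℝ)
    (hc : ContinuousOn u (Metric.closedBall 0 r))
    (hsm : ContDiffOn ℝ 2 u ({x | 0 < u x} ∩ Metric.ball 0 r))
    (hΔ : ∀ x ∈ {x | 0 < u x} ∩ Metric.ball (0 : EuclideanSpace ℝ (Fin n)) r,
      κ ≤ laplacian u x)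
    (h0 : u 0 = 0)
    (x₀ : EuclideanSpace ℝ (Fin n)) (hx₀ : x₀ ∈ Metric.ball (0 : EuclideanSpace ℝ (Fin n)) (r / 2))
    (hux₀ : 0 < u x₀) :
    κ * r ^ 2 / (16 * n) ≤ sSup (u '' Metric.sphere (0 : EuclideanSpace ℝ (Fin n)) r) :=
  nondegeneracy_growth_general hn r κ hr hκ u hc hsm hΔ x₀ hx₀ hux₀
end
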